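/- Let γ > 1 and let Ω ⊆ ℝ² be open and connected. Let φ ∈ C²(Ω), ρ ∈ C¹(Ω, (0,∞)), set (U,V) := Dφ (the pseudo-velocity), and p := ρ^γ/γ. Suppose that on Ω the self-similar mass and momentum equations of the full Euler system hold: (ρU)_ξ + (ρV)_η + 2ρ = 0, (ρU² + p)_ξ + (ρUV)_η + 3ρU = 0, and (ρUV)_ξ + (ρV² + p)_η + 3ρV = 0. Then there exists a constant B ∈ ℝ such that (ρ^{γ−1} − 1)/(γ−1) + ½|Dφ|² + φ = B on Ω; that is, (ρ, φ) satisfies the self-similar potential flow system div(ρDφ) + 2ρ = 0 and (ρ^{γ−1}−1)/(γ−1) + ½|Dφ|² + φ = B. -/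

import Mathlib

/-!
Subtracting `U` (resp. `V`) times the mass equation from the `ξ`- (resp. `η`-) momentum equation
leaves `ρ (U U_ξ + V U_η + U) + p_ξ = 0`. Irrotationality gives `U_η = V_ξ`, and
`p_ξ / ρ = ρ^(γ-2) ρ_ξ = (ρ^(γ-1) / (γ-1))_ξ`, so after division by `ρ > 0` the two momentum
equations say exactly that both partial derivatives of the Bernoulli function
`(ρ^(γ-1) - 1)/(γ-1) + ½|Dφ|² + φ` vanish. Being differentiable on the connected open set `Ω`,
it is constant there.
-/

noncomputable def pdxi (f : ℝ → ℝ → ℝ) (ξ η : ℝ) : ℝ := deriv (fun s => f s η) ξ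
noncomputable def pdeta (f : ℝ → ℝ → ℝ) (ξ η : ℝ) : ℝ := deriv (fun s => f ξ s) η

open Function Set

section PartialDerivatives

variable {f : ℝ → ℝ → ℝ} {a b : ℝ} {Ω : Set (ℝ × ℝ)}

theorem hasDerivAt_pdxi (hf : DifferentiableAt ℝ (uncurry f) (a, b)) :
    HasDerivAt (fun s => f s b) (pdxi f a b) a :=
  (hf.comp (f := fun s => (s, b)) a
    (differentiableAt_id.prodMk (differentiableAt_const b))).hasDerivAt

theorem hasDerivAt_pdeta (hf : DifferentiableAt ℝ (uncurry f) (a, b)) :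
    HasDerivAt (fun s => f a s) (pdeta f a b) b :=
  (hf.comp (f := fun s => (a, s)) b
    ((differentiableAt_const a).prodMk differentiableAt_id)).hasDerivAt

theorem pdxi_eq_fderiv (hf : DifferentiableAt ℝ (uncurry f) (a, b)) :
    pdxi f a b = fderiv ℝ (uncurry f) (a, b) (1, 0) :=
  (hf.hasFDerivAt.comp_hasDerivAt (f := fun s => (s, b)) a
    ((hasDerivAt_id a).prodMk (hasDerivAt_const a b))).deriv

theorem pdeta_eq_fderiv (hf : DifferentiableAt ℝ (uncurry f) (a, b)) :
    pdeta f a b = fderiv ℝ (uncurry f) (a, b) (0, 1) :=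
  (hf.hasFDerivAt.comp_hasDerivAt (f := fun s => (a, s)) b
    ((hasDerivAt_const b a).prodMk (hasDerivAt_id b))).deriv

theorem eqOn_uncurry_pdxi (hΩ : IsOpen Ω) (hf : DifferentiableOn ℝ (uncurry f) Ω) :
    EqOn (uncurry (pdxi f)) (fun q => fderiv ℝ (uncurry f) q (1, 0)) Ω :=
  fun _ hq => pdxi_eq_fderiv (hf.differentiableAt (hΩ.mem_nhds hq))

theorem eqOn_uncurry_pdeta (hΩ : IsOpen Ω) (hf : DifferentiableOn ℝ (uncurry f) Ω) :
    EqOn (uncurry (pdeta f)) (fun q => fderiv ℝ (uncurry f) q (0, 1)) Ω :=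
  fun _ hq => pdeta_eq_fderiv (hf.differentiableAt (hΩ.mem_nhds hq))

theorem ContDiffOn.uncurry_pdxi {m n : WithTop ℕ∞} (hf : ContDiffOn ℝ n (uncurry f) Ω)
    (hΩ : IsOpen Ω) (hmn : m + 1 ≤ n) : ContDiffOn ℝ m (uncurry (pdxi f)) Ω :=
  ((hf.fderiv_of_isOpen hΩ hmn).clm_apply contDiffOn_const).congr
    (eqOn_uncurry_pdxi hΩ ((hf.of_le (le_add_self.trans hmn)).differentiableOn one_ne_zero))

theorem ContDiffOn.uncurry_pdeta {m n : WithTop ℕ∞} (hf : ContDiffOn ℝ n (uncurry f) Ω)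
    (hΩ : IsOpen Ω) (hmn : m + 1 ≤ n) : ContDiffOn ℝ m (uncurry (pdeta f)) Ω :=
  ((hf.fderiv_of_isOpen hΩ hmn).clm_apply contDiffOn_const).congr
    (eqOn_uncurry_pdeta hΩ ((hf.of_le (le_add_self.trans hmn)).differentiableOn one_ne_zero))

theorem fderiv_fderiv_apply_of_eqOn {g : ℝ × ℝ → ℝ} {F : ℝ × ℝ → ℝ} {v w q : ℝ × ℝ}
    (hΩ : IsOpen Ω) (hq : q ∈ Ω) (hg : EqOn g (fun y => fderiv ℝ F y v) Ω)
    (hF : DifferentiableAt ℝ (fderiv ℝ F) q) :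
    fderiv ℝ g q w = fderiv ℝ (fderiv ℝ F) q w v := by
  rw [(hg.eventuallyEq_of_mem (hΩ.mem_nhds hq)).fderiv_eq,
    fderiv_clm_apply hF (differentiableAt_const v)]
  simp

theorem pdeta_pdxi_eq_pdxi_pdeta (hf : ContDiffOn ℝ 2 (uncurry f) Ω) (hΩ : IsOpen Ω)
    (hab : (a, b) ∈ Ω) : pdeta (pdxi f) a b = pdxi (pdeta f) a b := by
  have hf1 : DifferentiableOn ℝ (uncurry f) Ω := hf.differentiableOn two_ne_zero
  have hF : DifferentiableAt ℝ (fderiv ℝ (uncurry f)) (a, b) :=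
    ((hf.fderiv_of_isOpen hΩ (m := 1) (by norm_num)).differentiableOn
      one_ne_zero).differentiableAt (hΩ.mem_nhds hab)
  have hU := (hf.uncurry_pdxi hΩ (m := 1) (by norm_num)).differentiableOn one_ne_zero
  have hV := (hf.uncurry_pdeta hΩ (m := 1) (by norm_num)).differentiableOn one_ne_zero
  rw [pdeta_eq_fderiv (hU.differentiableAt (hΩ.mem_nhds hab)),
    pdxi_eq_fderiv (hV.differentiableAt (hΩ.mem_nhds hab)),
    fderiv_fderiv_apply_of_eqOn hΩ hab (eqOn_uncurry_pdxi hΩ hf1) hF,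
    fderiv_fderiv_apply_of_eqOn hΩ hab (eqOn_uncurry_pdeta hΩ hf1) hF]
  exact (hf.contDiffAt (hΩ.mem_nhds hab)).isSymmSndFDerivAt (by simp) _ _

theorem IsOpen.exists_eq_const_of_pdxi_pdeta_eq_zero (hΩ : IsOpen Ω) (hΩc : IsPreconnected Ω)
    (hf : DifferentiableOn ℝ (uncurry f) Ω)
    (hξ : ∀ ξ η, (ξ, η) ∈ Ω → pdxi f ξ η = 0) (hη : ∀ ξ η, (ξ, η) ∈ Ω → pdeta f ξ η = 0) :
    ∃ B, ∀ ξ η, (ξ, η) ∈ Ω → f ξ η = B := by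
  obtain ⟨B, hB⟩ := hΩ.exists_is_const_of_fderiv_eq_zero hΩc hf fun q hq => by
    have hfq := hf.differentiableAt (hΩ.mem_nhds hq)
    refine ContinuousLinearMap.prod_ext (ContinuousLinearMap.ext_ring ?_)
      (ContinuousLinearMap.ext_ring ?_)
    · simpa [pdxi_eq_fderiv hfq] using hξ q.1 q.2 hq
    · simpa [pdeta_eq_fderiv hfq] using hη q.1 q.2 hq
  exact ⟨B, fun ξ η h => hB (ξ, η) h⟩

end PartialDerivatives

section Slices

variable {R U V Φ : ℝ → ℝ} {r' u' v' φ' γ s : ℝ}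

theorem HasDerivAt.mul_sq_add_rpow_div (hR : HasDerivAt R r' s) (hU : HasDerivAt U u' s)
    (hpos : 0 < R s) (hγ : γ ≠ 0) :
    HasDerivAt (fun t => R t * U t ^ 2 + R t ^ γ / γ)
      (r' * U s ^ 2 + 2 * R s * U s * u' + R s ^ (γ - 1) * r') s := by
  refine ((hR.mul (hU.fun_pow 2)).add
    ((hR.rpow_const (Or.inl hpos.ne')).div_const γ)).congr_deriv ?_
  field_simp
  ring

theorem HasDerivAt.bernoulli (hR : HasDerivAt R r' s) (hU : HasDerivAt U u' s)
    (hV : HasDerivAt V v' s) (hΦ : HasDerivAt Φ φ' s) (hpos : 0 < R s) (hγ : γ ≠ 1) :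
    HasDerivAt (fun t => (R t ^ (γ - 1) - 1) / (γ - 1) + 1 / 2 * (U t ^ 2 + V t ^ 2) + Φ t)
      (R s ^ (γ - 2) * r' + U s * u' + V s * v' + φ') s := by
  have hγ' : γ - 1 ≠ 0 := sub_ne_zero.2 hγ
  refine (((((hR.rpow_const (Or.inl hpos.ne')).sub_const 1).div_const (γ - 1)).add
    (((hU.fun_pow 2).add (hV.fun_pow 2)).const_mul (1 / 2))).add hΦ).congr_deriv ?_
  rw [show γ - 1 - 1 = γ - 2 by ring]
  field_simp
  ring

end Slices

theorem bernoulli_partial_eq_zero_of_mass_momentum {γ r u v rx ux vx ry uy vy : ℝ}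
    (hr : 0 < r) (hcurl : uy = vx)
    (hmass : rx * u + r * ux + (ry * v + r * vy) + 2 * r = 0)
    (hmom : rx * u ^ 2 + 2 * r * u * ux + r ^ (γ - 1) * rx + ((ry * u + r * uy) * v + r * u * vy)
      + 3 * (r * u) = 0) :
    r ^ (γ - 2) * rx + u * ux + v * vx + u = 0 := by
  have hpow : r ^ (γ - 1) = r * r ^ (γ - 2) := by
    rw [show γ - 1 = 1 + (γ - 2) by ring, Real.rpow_add hr, Real.rpow_one]
  have h : r * (r ^ (γ - 2) * rx + u * ux + v * vx + u) = 0 := by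
    subst hcurl
    linear_combination hmom - u * hmass - rx * hpow
  exact (mul_eq_zero.1 h).resolve_left hr.ne'

noncomputable def bernoulliFunction (γ : ℝ) (φ ρ : ℝ → ℝ → ℝ) (ξ η : ℝ) : ℝ :=
  (ρ ξ η ^ (γ - 1) - 1) / (γ - 1) + 1 / 2 * (pdxi φ ξ η ^ 2 + pdeta φ ξ η ^ 2) + φ ξ η

section Bernoulli

variable {γ ξ η : ℝ} {φ ρ : ℝ → ℝ → ℝ}

theorem bernoulliFunction_partials_eq_zero (hγ₀ : γ ≠ 0) (hγ₁ : γ ≠ 1)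
    (hφ : DifferentiableAt ℝ (uncurry φ) (ξ, η))
    (hU : DifferentiableAt ℝ (uncurry (pdxi φ)) (ξ, η))
    (hV : DifferentiableAt ℝ (uncurry (pdeta φ)) (ξ, η))
    (hcurl : pdeta (pdxi φ) ξ η = pdxi (pdeta φ) ξ η)
    (hρ : DifferentiableAt ℝ (uncurry ρ) (ξ, η)) (hρpos : 0 < ρ ξ η)
    (hmass : pdxi (fun a b => ρ a b * pdxi φ a b) ξ η
        + pdeta (fun a b => ρ a b * pdeta φ a b) ξ η + 2 * ρ ξ η = 0)
    (hmomx : pdxi (fun a b => ρ a b * (pdxi φ a b)^2 + (ρ a b) ^ γ / γ) ξ η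
        + pdeta (fun a b => ρ a b * pdxi φ a b * pdeta φ a b) ξ η
        + 3 * (ρ ξ η * pdxi φ ξ η) = 0)
    (hmomy : pdxi (fun a b => ρ a b * pdxi φ a b * pdeta φ a b) ξ η
        + pdeta (fun a b => ρ a b * (pdeta φ a b)^2 + (ρ a b) ^ γ / γ) ξ η
        + 3 * (ρ ξ η * pdeta φ ξ η) = 0) :
    pdxi (bernoulliFunction γ φ ρ) ξ η = 0 ∧ pdeta (bernoulliFunction γ φ ρ) ξ η = 0 := by
  have hRx := hasDerivAt_pdxi hρ
  have hRy := hasDerivAt_pdeta hρ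
  have hUx := hasDerivAt_pdxi hU
  have hUy := hasDerivAt_pdeta hU
  have hVx := hasDerivAt_pdxi hV
  have hVy := hasDerivAt_pdeta hV
  set r := ρ ξ η
  set u := pdxi φ ξ η
  set v := pdeta φ ξ η
  set rx := pdxi ρ ξ η
  set ry := pdeta ρ ξ η
  set ux := pdxi (pdxi φ) ξ η
  set uy := pdeta (pdxi φ) ξ η
  set vx := pdxi (pdeta φ) ξ η
  set vy := pdeta (pdeta φ) ξ η
  have hmass' : rx * u + r * ux + (ry * v + r * vy) + 2 * r = 0 := by
    convert hmass using 3
    exacts [(hRx.mul hUx).deriv.symm, (hRy.mul hVy).deriv.symm]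
  have hmomx' : rx * u ^ 2 + 2 * r * u * ux + r ^ (γ - 1) * rx
      + ((ry * u + r * uy) * v + r * u * vy) + 3 * (r * u) = 0 := by
    convert hmomx using 3
    exacts [(hRx.mul_sq_add_rpow_div hUx hρpos hγ₀).deriv.symm,
      ((hRy.mul hUy).mul hVy).deriv.symm]
  have hmomy' : (rx * u + r * ux) * v + r * u * vx
      + (ry * v ^ 2 + 2 * r * v * vy + r ^ (γ - 1) * ry) + 3 * (r * v) = 0 := by
    convert hmomy using 3
    exacts [((hRx.mul hUx).mul hVx).deriv.symm,
      (hRy.mul_sq_add_rpow_div hVy hρpos hγ₀).deriv.symm]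
  constructor
  · calc pdxi (bernoulliFunction γ φ ρ) ξ η = r ^ (γ - 2) * rx + u * ux + v * vx + u :=
          (hRx.bernoulli hUx hVx (hasDerivAt_pdxi hφ) hρpos hγ₁).deriv
      _ = 0 := bernoulli_partial_eq_zero_of_mass_momentum hρpos hcurl hmass' hmomx'
  · calc pdeta (bernoulliFunction γ φ ρ) ξ η = r ^ (γ - 2) * ry + u * uy + v * vy + v :=
          (hRy.bernoulli hUy hVy (hasDerivAt_pdeta hφ) hρpos hγ₁).deriv
      _ = 0 := by
        linear_combination bernoulli_partial_eq_zero_of_mass_momentum (u := v) (v := u)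
          (rx := ry) (ux := vy) (vx := uy) (ry := rx) (uy := vx) (vy := ux)
          hρpos hcurl.symm (by linear_combination hmass') (by linear_combination hmomy')

theorem differentiableOn_uncurry_bernoulliFunction {Ω : Set (ℝ × ℝ)}
    (hφ : DifferentiableOn ℝ (uncurry φ) Ω) (hU : DifferentiableOn ℝ (uncurry (pdxi φ)) Ω)
    (hV : DifferentiableOn ℝ (uncurry (pdeta φ)) Ω) (hρ : DifferentiableOn ℝ (uncurry ρ) Ω)
    (hρpos : ∀ ξ η, (ξ, η) ∈ Ω → 0 < ρ ξ η) :
    DifferentiableOn ℝ (uncurry (bernoulliFunction γ φ ρ)) Ω := by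
  have hρ' : DifferentiableOn ℝ (fun q : ℝ × ℝ => ρ q.1 q.2 ^ (γ - 1)) Ω :=
    hρ.rpow_const fun q hq => Or.inl (hρpos q.1 q.2 hq).ne'
  unfold bernoulliFunction
  fun_prop

end Bernoulli

/-- If (U,V) = Dφ (pseudo-velocity of a potential flow) and
p = ρ^γ/γ, and the self-similar mass and momentum equations of the full Euler
system hold on an open connected Ω, then Bernoulli's law
(ρ^(γ−1) − 1)/(γ−1) + ½|Dφ|² + φ = B holds on Ω for some constant B; that is,
(ρ, φ) solves the self-similar potential flow system. -/
theorem euler_potential_bernoulli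
    (γ : ℝ) (hγ : 1 < γ)
    (Ω : Set (ℝ × ℝ)) (hΩo : IsOpen Ω) (hΩc : IsConnected Ω)
    (φ ρ : ℝ → ℝ → ℝ)
    (hφC2 : ContDiffOn ℝ 2 (fun q : ℝ × ℝ => φ q.1 q.2) Ω)
    (hρC1 : ContDiffOn ℝ 1 (fun q : ℝ × ℝ => ρ q.1 q.2) Ω)
    (hρpos : ∀ ξ η : ℝ, (ξ, η) ∈ Ω → 0 < ρ ξ η)
    -- mass: (ρU)_ξ + (ρV)_η + 2ρ = 0 with U = φ_ξ, V = φ_η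
    (hmass : ∀ ξ η : ℝ, (ξ, η) ∈ Ω →
      pdxi (fun a b => ρ a b * pdxi φ a b) ξ η
        + pdeta (fun a b => ρ a b * pdeta φ a b) ξ η + 2 * ρ ξ η = 0)
    -- x-momentum: (ρU² + p)_ξ + (ρUV)_η + 3ρU = 0 with p = ρ^γ/γ
    (hmomx : ∀ ξ η : ℝ, (ξ, η) ∈ Ω →
      pdxi (fun a b => ρ a b * (pdxi φ a b)^2 + (ρ a b) ^ γ / γ) ξ η
        + pdeta (fun a b => ρ a b * pdxi φ a b * pdeta φ a b) ξ η
        + 3 * (ρ ξ η * pdxi φ ξ η) = 0)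
    -- y-momentum: (ρUV)_ξ + (ρV² + p)_η + 3ρV = 0
    (hmomy : ∀ ξ η : ℝ, (ξ, η) ∈ Ω →
      pdxi (fun a b => ρ a b * pdxi φ a b * pdeta φ a b) ξ η
        + pdeta (fun a b => ρ a b * (pdeta φ a b)^2 + (ρ a b) ^ γ / γ) ξ η
        + 3 * (ρ ξ η * pdeta φ ξ η) = 0) :
    ∃ B : ℝ, ∀ ξ η : ℝ, (ξ, η) ∈ Ω →
      (((ρ ξ η) ^ (γ - 1) - 1) / (γ - 1)
        + (1/2) * ((pdxi φ ξ η)^2 + (pdeta φ ξ η)^2) + φ ξ η = B) ∧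
      (pdxi (fun a b => ρ a b * pdxi φ a b) ξ η
        + pdeta (fun a b => ρ a b * pdeta φ a b) ξ η + 2 * ρ ξ η = 0) := by
  have hφ : DifferentiableOn ℝ (uncurry φ) Ω := hφC2.differentiableOn two_ne_zero
  have hU := (hφC2.uncurry_pdxi hΩo (m := 1) (by norm_num)).differentiableOn one_ne_zero
  have hV := (hφC2.uncurry_pdeta hΩo (m := 1) (by norm_num)).differentiableOn one_ne_zero
  have hρ : DifferentiableOn ℝ (uncurry ρ) Ω := hρC1.differentiableOn one_ne_zero
  have hpartials : ∀ ξ η, (ξ, η) ∈ Ω → pdxi (bernoulliFunction γ φ ρ) ξ η = 0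
      ∧ pdeta (bernoulliFunction γ φ ρ) ξ η = 0 := fun ξ η h =>
    have hnhds := hΩo.mem_nhds h
    bernoulliFunction_partials_eq_zero (zero_lt_one.trans hγ).ne' hγ.ne'
      (hφ.differentiableAt hnhds) (hU.differentiableAt hnhds) (hV.differentiableAt hnhds)
      (pdeta_pdxi_eq_pdxi_pdeta hφC2 hΩo h) (hρ.differentiableAt hnhds) (hρpos ξ η h)
      (hmass ξ η h) (hmomx ξ η h) (hmomy ξ η h)
  obtain ⟨B, hB⟩ := hΩo.exists_eq_const_of_pdxi_pdeta_eq_zero hΩc.isPreconnected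
    (differentiableOn_uncurry_bernoulliFunction hφ hU hV hρ hρpos)
    (fun ξ η h => (hpartials ξ η h).1) (fun ξ η h => (hpartials ξ η h).2)
  exact ⟨B, fun ξ η h => ⟨hB ξ η h, hmass ξ η h⟩⟩
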